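/- arXiv:2205.01926 — 3 statements merged into one kernel-verified Lean document; each statement's English description precedes it below -/
import Mathlib

section
/- Let (A, τ, φ) be a conditional non-commutative probability space with unital subalgebras A₁, A₂ conditionally free with respect to (τ, φ). Assume φ coincides with τ on A₂, and let I₁ be an ideal of A₁ with I₁ ⊂ ker τ. Then the pair (I₁, A₂) is monotonically independent with respect to φ. -/
/-!
Write every letter `b` from `A₂` as `(b - τ b • 1) + τ b • 1`. In a word where all `A₂`-letters
are `τ`-centred, multiplying adjacent `I₁`-letters together (allowed since `I₁` is closed under
products) gives an alternating word of `τ`-centred letters, so conditional freeness factorizes its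
`φ`-value, and the factor `φ (b - τ b • 1) = τ (b - τ b • 1) = 0` kills it. Hence removing the
non-centred `A₂`-letters one at a time only pulls out the scalars `τ b = φ b`, leaving
`φ (a₁ ⋯ aₙ) * ∏ φ (b k)`. The induction runs over words in which no two `A₂`-letters are
adjacent, a class closed under deleting an `A₂`-letter.
-/

open scoped BigOperators

namespace CondFreeMonotone

/-! A word is a list of letters tagged by the algebra they come from: `true` for the first
algebra, `false` for the second. -/

section Letters

variable {α : Type*}

def firstLetters (w : List (Bool × α)) : List α := (w.filter (·.1)).map Prod.snd

def secondLetters (w : List (Bool × α)) : List α := (w.filter (!·.1)).map Prod.snd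

@[simp] theorem mem_secondLetters {y : α} {w : List (Bool × α)} :
    y ∈ secondLetters w ↔ (false, y) ∈ w := by
  simp [secondLetters]

theorem isChain_or_append_of_cons_false {s t : List Bool}
    (h : (s ++ false :: t).IsChain (fun a b => a || b)) : (s ++ t).IsChain (fun a b => a || b) := by
  rw [List.isChain_append, List.isChain_cons] at h
  refine List.isChain_append.2 ⟨h.1, h.2.1.2, fun a ha b _ => ?_⟩
  have ha : a = true := by simpa using h.2.2 a ha false rfl
  simp [ha]

variable (a b : ℕ → α)

def interleave : ℕ → List (Bool × α)
  | 0 => [(false, b 0)]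
  | n + 1 => interleave n ++ [(true, a n), (false, b (n + 1))]

theorem firstLetters_interleave (n : ℕ) :
    firstLetters (interleave a b n) = (List.range n).map a := by
  induction n with
  | zero => simp [interleave, firstLetters]
  | succ n ih => simp_all [interleave, firstLetters, List.range_succ]

theorem secondLetters_interleave (n : ℕ) :
    secondLetters (interleave a b n) = (List.range (n + 1)).map b := by
  induction n with
  | zero => simp [interleave, secondLetters]
  | succ n ih => simp_all [interleave, secondLetters, List.range_succ]

theorem getLast?_interleave (n : ℕ) : (interleave a b n).getLast? = some (false, b n) := by
  cases n <;> simp [interleave]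

theorem isChain_interleave (n : ℕ) :
    ((interleave a b n).map Prod.fst).IsChain (fun s t => s || t) := by
  induction n with
  | zero => simp [interleave]
  | succ n ih =>
    rw [interleave, List.map_append]
    refine ih.append (by simp) ?_
    simp [List.getLast?_map, getLast?_interleave]

theorem forall_mem_interleave {S T : Set α} {n : ℕ} (ha : ∀ k < n, a k ∈ S)
    (hb : ∀ k ≤ n, b k ∈ T) : ∀ p ∈ interleave a b n, p.2 ∈ if p.1 then S else T := by
  induction n with
  | zero => simpa [interleave] using hb 0 le_rfl
  | succ n ih =>
    simp only [interleave, List.mem_append, List.mem_cons, List.mem_nil_iff, or_false]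
    rintro p (hp | rfl | rfl)
    · exact ih (fun k hk => ha k (by omega)) (fun k hk => hb k (by omega)) p hp
    · simpa using ha n (by omega)
    · simpa using hb (n + 1) le_rfl

end Letters

section MergeRuns

variable {M : Type*} [Mul M]

def consFirst (x : M) : List (Bool × M) → List (Bool × M)
  | [] => [(true, x)]
  | (true, y) :: w => (true, x * y) :: w
  | (false, y) :: w => (true, x) :: (false, y) :: w

def mergeRuns : List (Bool × M) → List (Bool × M)
  | [] => []
  | (true, x) :: w => consFirst x (mergeRuns w)
  | (false, y) :: w => (false, y) :: mergeRuns w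

theorem mem_consFirst_of_mem {x y : M} {w : List (Bool × M)} (h : (false, y) ∈ w) :
    (false, y) ∈ consFirst x w := by
  match w with
  | (true, z) :: w => simpa [consFirst] using h
  | (false, z) :: w => simp only [consFirst, List.mem_cons] at h ⊢; tauto

theorem mem_mergeRuns_of_mem {y : M} {w : List (Bool × M)} (h : (false, y) ∈ w) :
    (false, y) ∈ mergeRuns w := by
  induction w with
  | nil => simp at h
  | cons p w ih =>
    obtain ⟨_ | _, x⟩ := p
    · simp only [mergeRuns, List.mem_cons] at h ⊢
      exact h.imp id ih
    · exact mem_consFirst_of_mem (ih (by simpa using h))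

theorem forall_mem_consFirst {S T : Set M} (hS : ∀ x ∈ S, ∀ y ∈ S, x * y ∈ S) {x : M}
    (hx : x ∈ S) {w : List (Bool × M)} (hw : ∀ p ∈ w, p.2 ∈ if p.1 then S else T) :
    ∀ p ∈ consFirst x w, p.2 ∈ if p.1 then S else T := by
  match w with
  | [] => simpa [consFirst] using hx
  | (true, y) :: w =>
    simp only [List.forall_mem_cons, consFirst] at hw ⊢
    exact ⟨by simpa using hS x hx y (by simpa using hw.1), hw.2⟩
  | (false, y) :: w => simpa [consFirst, hx] using hw

theorem forall_mem_mergeRuns {S T : Set M} (hS : ∀ x ∈ S, ∀ y ∈ S, x * y ∈ S)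
    {w : List (Bool × M)} (hw : ∀ p ∈ w, p.2 ∈ if p.1 then S else T) :
    ∀ p ∈ mergeRuns w, p.2 ∈ if p.1 then S else T := by
  induction w with
  | nil => simp [mergeRuns]
  | cons p w ih =>
    rw [List.forall_mem_cons] at hw
    obtain ⟨_ | _, x⟩ := p
    · simp only [mergeRuns, List.forall_mem_cons]
      exact ⟨hw.1, ih hw.2⟩
    · exact forall_mem_consFirst hS (by simpa using hw.1) (ih hw.2)

theorem head?_map_fst_mergeRuns (w : List (Bool × M)) :
    ((mergeRuns w).map Prod.fst).head? = (w.map Prod.fst).head? := by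
  match w with
  | [] => rfl
  | (false, y) :: w => rfl
  | (true, x) :: w =>
    simp only [mergeRuns]
    cases mergeRuns w with
    | nil => rfl
    | cons p w' => obtain ⟨_ | _, y⟩ := p <;> rfl

theorem isChain_ne_consFirst (x : M) {w : List (Bool × M)}
    (hw : (w.map Prod.fst).IsChain (· ≠ ·)) :
    ((consFirst x w).map Prod.fst).IsChain (· ≠ ·) := by
  match w with
  | [] => simp [consFirst]
  | (true, y) :: w => simpa [consFirst] using hw
  | (false, y) :: w => simpa [consFirst] using hw

theorem isChain_ne_mergeRuns {w : List (Bool × M)}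
    (hw : (w.map Prod.fst).IsChain (fun s t => s || t)) :
    ((mergeRuns w).map Prod.fst).IsChain (· ≠ ·) := by
  induction w with
  | nil => simp [mergeRuns]
  | cons p w ih =>
    rw [List.map_cons, List.isChain_cons] at hw
    obtain ⟨_ | _, x⟩ := p
    · simp only [mergeRuns, List.map_cons, List.isChain_cons, head?_map_fst_mergeRuns]
      refine ⟨fun t ht => ?_, ih hw.2⟩
      simpa using hw.1 t ht
    · exact isChain_ne_consFirst x (ih hw.2)

end MergeRuns

section WordProd

variable {M : Type*} [Monoid M]

def wordProd (w : List (Bool × M)) : M := (w.map Prod.snd).prod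

@[simp] theorem wordProd_nil : wordProd ([] : List (Bool × M)) = 1 := rfl

@[simp] theorem wordProd_cons (p : Bool × M) (w : List (Bool × M)) :
    wordProd (p :: w) = p.2 * wordProd w := List.prod_cons

@[simp] theorem wordProd_append (v w : List (Bool × M)) :
    wordProd (v ++ w) = wordProd v * wordProd w := by
  simp [wordProd]

theorem wordProd_consFirst (x : M) (w : List (Bool × M)) :
    wordProd (consFirst x w) = x * wordProd w := by
  match w with
  | [] => simp [consFirst]
  | (true, y) :: w => simp [consFirst, mul_assoc]
  | (false, y) :: w => simp [consFirst]

theorem wordProd_mergeRuns (w : List (Bool × M)) : wordProd (mergeRuns w) = wordProd w := by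
  induction w with
  | nil => rfl
  | cons p w ih => obtain ⟨_ | _, x⟩ := p <;> simp [mergeRuns, wordProd_consFirst, ih]

theorem wordProd_eq_prod_firstLetters {w : List (Bool × M)} (h : secondLetters w = []) :
    wordProd w = (firstLetters w).prod := by
  have : w.filter (·.1) = w := List.filter_eq_self.2 fun p hp => by
    obtain ⟨_ | _, x⟩ := p
    · exact absurd hp (by simpa using List.eq_nil_iff_forall_not_mem.1 h x)
    · rfl
  rw [firstLetters, this, wordProd]

theorem wordProd_interleave (a b : ℕ → M) (n : ℕ) :
    wordProd (interleave a b n) = b 0 * ((List.range n).map fun k => a k * b (k + 1)).prod := by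
  induction n with
  | zero => simp [interleave]
  | succ n ih => simp [interleave, ih, List.range_succ, mul_assoc]

end WordProd

theorem prod_range_eq_prod_map_range {M : Type*} [CommMonoid M] (f : ℕ → M) (n : ℕ) :
    ∏ k ∈ Finset.range n, f k = ((List.range n).map f).prod := by
  rw [Finset.prod_eq_multiset_prod]; rfl

variable {R A : Type*} [CommRing R] [Ring A] [Algebra R A]

theorem wordProd_split (v w : List (Bool × A)) (t : Bool) (b : A) (c : R) :
    wordProd (v ++ (t, b) :: w) = wordProd (v ++ (t, b - c • 1) :: w) + c • wordProd (v ++ w) := by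
  simp [sub_mul, mul_sub]

def IsCondFree (τ φ : A →ₗ[R] R) (A₁ A₂ : Subalgebra R A) : Prop :=
  ∀ (n : ℕ) (a : ℕ → A) (i : ℕ → Bool), 1 < n →
    (∀ k < n, a k ∈ (if i k then A₁ else A₂)) →
    (∀ k, k + 1 < n → i k ≠ i (k + 1)) →
    (∀ k < n, τ (a k) = 0) →
    τ (((List.range n).map a).prod) = 0 ∧
    φ (((List.range n).map a).prod) = ∏ k ∈ Finset.range n, φ (a k)

variable {τ φ : A →ₗ[R] R} {A₁ A₂ : Subalgebra R A}

theorem IsCondFree.apply_wordProd (h : IsCondFree τ φ A₁ A₂) {w : List (Bool × A)}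
    (hne : w ≠ []) (halt : (w.map Prod.fst).IsChain (· ≠ ·))
    (hmem : ∀ p ∈ w, p.2 ∈ (if p.1 then A₁ else A₂) ∧ τ p.2 = 0) :
    φ (wordProd w) = (w.map (φ ∘ Prod.snd)).prod := by
  rcases Nat.lt_or_ge 1 w.length with hlen | hlen
  · set d : Bool × A := (true, 0)
    have hget : ∀ k (hk : k < w.length), w.getD k d = w[k] := by simp_all
    have hw : (List.range w.length).map (w.getD · d) = w :=
      List.ext_getElem (by simp) (by simp_all)
    rw [List.isChain_map] at halt
    have key := (h w.length (fun k => (w.getD k d).2) (fun k => (w.getD k d).1) hlen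
      (fun k hk => by rw [hget k hk]; exact (hmem _ (List.getElem_mem hk)).1)
      (fun k hk => by rw [hget k (by omega), hget (k + 1) hk]; exact halt.getElem k hk)
      (fun k hk => by rw [hget k hk]; exact (hmem _ (List.getElem_mem hk)).2)).2
    have e₁ : w.map Prod.snd = (List.range w.length).map (fun k => (w.getD k d).2) := by
      conv_lhs => rw [← hw]
      rw [List.map_map]; rfl
    have e₂ : w.map (φ ∘ Prod.snd) = (List.range w.length).map (fun k => φ (w.getD k d).2) := by
      conv_lhs => rw [← hw]
      rw [List.map_map]; rfl
    rw [wordProd, e₁, key, e₂, prod_range_eq_prod_map_range]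
  · obtain ⟨p, rfl⟩ : ∃ p, w = [p] :=
      List.length_eq_one_iff.mp (by have := List.length_pos_iff.mpr hne; omega)
    simp

theorem apply_wordProd_eq_zero (hcf : IsCondFree τ φ A₁ A₂)
    (hφτ : ∀ b ∈ A₂, φ b = τ b) {S : Set A} (hS : ∀ x ∈ S, ∀ y ∈ S, x * y ∈ S)
    (hSA₁ : S ⊆ A₁) (hSτ : ∀ x ∈ S, τ x = 0) {w : List (Bool × A)}
    (hadj : (w.map Prod.fst).IsChain (fun s t => s || t))
    (hmem : ∀ p ∈ w, p.2 ∈ if p.1 then S else (A₂ : Set A))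
    (hcent : ∀ b ∈ secondLetters w, τ b = 0) {b : A} (hb : b ∈ secondLetters w) :
    φ (wordProd w) = 0 := by
  have hmem' : ∀ p ∈ mergeRuns w, p.2 ∈ if p.1 then S else {b | b ∈ A₂ ∧ τ b = 0} := by
    refine forall_mem_mergeRuns hS ?_
    rintro ⟨_ | _, x⟩ hx
    · exact ⟨by simpa using hmem _ hx, hcent x (by simpa using hx)⟩
    · simpa using hmem _ hx
  have hb' := mem_mergeRuns_of_mem (mem_secondLetters.1 hb)
  rw [← wordProd_mergeRuns,
    hcf.apply_wordProd (List.ne_nil_of_mem hb') (isChain_ne_mergeRuns hadj)]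
  · obtain ⟨hbA₂, hbτ⟩ := hmem' _ hb'
    exact List.prod_eq_zero (List.mem_map.2 ⟨_, hb', by simp [hφτ b hbA₂, hbτ]⟩)
  · rintro ⟨_ | _, x⟩ hx
    · simpa using hmem' _ hx
    · have hxS : x ∈ S := by simpa using hmem' _ hx
      exact ⟨by simpa using hSA₁ hxS, hSτ x hxS⟩

def FactorsMonotonically (φ : A →ₗ[R] R) (w : List (Bool × A)) : Prop :=
  φ (wordProd w) = φ (firstLetters w).prod * ((secondLetters w).map φ).prod

theorem factorsMonotonically_of_forall_centered (hcf : IsCondFree τ φ A₁ A₂)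
    (hφτ : ∀ b ∈ A₂, φ b = τ b) {S : Set A} (hS : ∀ x ∈ S, ∀ y ∈ S, x * y ∈ S)
    (hSA₁ : S ⊆ A₁) (hSτ : ∀ x ∈ S, τ x = 0) {w : List (Bool × A)}
    (hadj : (w.map Prod.fst).IsChain (fun s t => s || t))
    (hmem : ∀ p ∈ w, p.2 ∈ if p.1 then S else (A₂ : Set A))
    (hcent : ∀ b ∈ secondLetters w, τ b = 0) : FactorsMonotonically φ w := by
  by_cases h : secondLetters w = []
  · simp [FactorsMonotonically, h, wordProd_eq_prod_firstLetters]
  obtain ⟨b, hb⟩ := List.exists_mem_of_ne_nil _ h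
  have hbA₂ : b ∈ A₂ := by simpa using hmem _ (mem_secondLetters.1 hb)
  rw [FactorsMonotonically, apply_wordProd_eq_zero hcf hφτ hS hSA₁ hSτ hadj hmem hcent hb,
    List.prod_eq_zero (List.mem_map.2 ⟨b, hb, by rw [hφτ b hbA₂, hcent b hb]⟩), mul_zero]

theorem factorsMonotonically_append_cons (hτ1 : τ 1 = 1) (hφτ : ∀ b ∈ A₂, φ b = τ b)
    {v w : List (Bool × A)} {b : A} (hb : b ∈ A₂)
    (h₀ : FactorsMonotonically φ (v ++ (false, b - τ b • 1) :: w))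
    (h₁ : FactorsMonotonically φ (v ++ w)) : FactorsMonotonically φ (v ++ (false, b) :: w) := by
  have hb₀ : φ (b - τ b • 1) = 0 := by
    rw [hφτ _ (A₂.sub_mem hb (A₂.smul_mem A₂.one_mem _))]
    simp [hτ1]
  rw [FactorsMonotonically, wordProd_split v w false b (τ b), map_add, map_smul, h₀, h₁]
  simp only [firstLetters, secondLetters, List.filter_append, List.filter_cons_of_neg,
    List.filter_cons_of_pos, Bool.false_eq_true, not_false_eq_true, Bool.not_false, List.map_append,
    List.map_cons, List.map_map, List.prod_append, List.prod_cons, hb₀, hφτ _ hb, zero_mul,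
    mul_zero, smul_eq_mul, zero_add]
  ring

theorem factorsMonotonically (hτ1 : τ 1 = 1) (hcf : IsCondFree τ φ A₁ A₂)
    (hφτ : ∀ b ∈ A₂, φ b = τ b) {S : Set A} (hS : ∀ x ∈ S, ∀ y ∈ S, x * y ∈ S)
    (hSA₁ : S ⊆ A₁) (hSτ : ∀ x ∈ S, τ x = 0) {w : List (Bool × A)}
    (hadj : (w.map Prod.fst).IsChain (fun s t => s || t))
    (hmem : ∀ p ∈ w, p.2 ∈ if p.1 then S else (A₂ : Set A)) : FactorsMonotonically φ w := by
  -- induction on the suffix `r` of `w = l ++ r` whose `A₂`-letters are not yet known to be centred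
  suffices ∀ r l : List (Bool × A), (∀ b ∈ secondLetters l, τ b = 0) →
      ((l ++ r).map Prod.fst).IsChain (fun s t => s || t) →
      (∀ p ∈ l ++ r, p.2 ∈ if p.1 then S else (A₂ : Set A)) → FactorsMonotonically φ (l ++ r) by
    simpa using this w [] (by simp) (by simpa using hadj) (by simpa using hmem)
  intro r
  induction r with
  | nil =>
    intro l hcent hadj hmem
    simp only [List.append_nil] at hadj hmem ⊢
    exact factorsMonotonically_of_forall_centered hcf hφτ hS hSA₁ hSτ hadj hmem hcent
  | cons p r ih =>
    intro l hcent hadj hmem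
    simp only [List.forall_mem_append, List.forall_mem_cons] at hmem
    obtain ⟨hl, hp, hr⟩ := hmem
    obtain ⟨_ | _, b⟩ := p
    · have hb : b ∈ A₂ := by simpa using hp
      have hb₀ : b - τ b • 1 ∈ A₂ := A₂.sub_mem hb (A₂.smul_mem A₂.one_mem _)
      refine factorsMonotonically_append_cons hτ1 hφτ hb ?_
        (ih l hcent (by simpa using isChain_or_append_of_cons_false (by simpa using hadj))
          (List.forall_mem_append.2 ⟨hl, hr⟩))
      simpa using ih (l ++ [(false, b - τ b • 1)]) (by simpa [or_imp, forall_and, hτ1] using hcent)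
        (by simpa using hadj)
        (List.forall_mem_append.2 ⟨List.forall_mem_append.2 ⟨hl, by simpa using hb₀⟩, hr⟩)
    · simpa using ih (l ++ [(true, b)]) (by simpa using hcent) (by simpa using hadj)
        (List.forall_mem_append.2 ⟨List.forall_mem_append.2 ⟨hl, by simpa using hp⟩, hr⟩)

end CondFreeMonotone

theorem conditionally_free_implies_monotone_independent_general
    {A : Type*} [Ring A] [Algebra ℂ A]
    (τ φ : A →ₗ[ℂ] ℂ) (hτ1 : τ 1 = 1)
    (A₁ A₂ : Subalgebra ℂ A)
    -- conditional freeness of `A₁` and `A₂` with respect to `(τ, φ)`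
    (hcfree : ∀ (n : ℕ) (a : ℕ → A) (i : ℕ → Bool), 1 < n →
        (∀ k < n, a k ∈ (if i k then A₁ else A₂)) →
        (∀ k, k + 1 < n → i k ≠ i (k + 1)) →
        (∀ k < n, τ (a k) = 0) →
        τ (((List.range n).map a).prod) = 0 ∧
        φ (((List.range n).map a).prod) = ∏ k ∈ Finset.range n, φ (a k))
    -- `φ` coincides with `τ` on `A₂`
    (hφτ : ∀ a ∈ A₂, φ a = τ a)
    -- `I₁` an ideal of `A₁` with `I₁ ⊆ ker τ`
    (I₁ : Set A)
    (hI₁sub : I₁ ⊆ (A₁ : Set A))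
    (hI₁mul : ∀ x ∈ I₁, ∀ a ∈ A₁, a * x ∈ I₁ ∧ x * a ∈ I₁)
    (hI₁ker : ∀ x ∈ I₁, τ x = 0) :
    -- monotone independence of `(I₁, A₂)` with respect to `φ`
    ∀ (n : ℕ) (a b : ℕ → A), 0 < n →
      (∀ k < n, a k ∈ I₁) → (∀ k ≤ n, b k ∈ A₂) →
      φ (b 0 * ((List.range n).map (fun k => a k * b (k + 1))).prod) =
        φ (((List.range n).map a).prod) * ∏ k ∈ Finset.range (n + 1), φ (b k) := by
  open CondFreeMonotone in
  intro n a b _ ha hb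
  have hI₁prod : ∀ x ∈ I₁, ∀ y ∈ I₁, x * y ∈ I₁ := fun x hx y hy => (hI₁mul x hx y (hI₁sub hy)).2
  have key : FactorsMonotonically φ (interleave a b n) :=
    factorsMonotonically hτ1 hcfree hφτ hI₁prod hI₁sub hI₁ker (isChain_interleave a b n)
      (forall_mem_interleave a b ha hb)
  rw [FactorsMonotonically, wordProd_interleave, firstLetters_interleave,
    secondLetters_interleave, List.map_map] at key
  rw [key, prod_range_eq_prod_map_range]
  rfl

/-- (Franz) If `A₁, A₂` are conditionally free with respect to `(τ, φ)`,
`φ` coincides with `τ` on `A₂`, and `I₁` is an ideal of `A₁` with `I₁ ⊆ ker τ`, then the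
pair `(I₁, A₂)` is monotonically independent with respect to `φ`. -/
theorem conditionally_free_implies_monotone_independent
    {A : Type*} [Ring A] [Algebra ℂ A]
    (τ φ : A →ₗ[ℂ] ℂ) (hτ1 : τ 1 = 1) (hφ1 : φ 1 = 1)
    (A₁ A₂ : Subalgebra ℂ A)
    -- conditional freeness of `A₁` and `A₂` with respect to `(τ, φ)`
    (hcfree : ∀ (n : ℕ) (a : ℕ → A) (i : ℕ → Bool), 1 < n →
        (∀ k < n, a k ∈ (if i k then A₁ else A₂)) →
        (∀ k, k + 1 < n → i k ≠ i (k + 1)) →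
        (∀ k < n, τ (a k) = 0) →
        τ (((List.range n).map a).prod) = 0 ∧
        φ (((List.range n).map a).prod) = ∏ k ∈ Finset.range n, φ (a k))
    -- `φ` coincides with `τ` on `A₂`
    (hφτ : ∀ a ∈ A₂, φ a = τ a)
    -- `I₁` an ideal of `A₁` with `I₁ ⊆ ker τ`
    (I₁ : Set A)
    (hI₁sub : I₁ ⊆ (A₁ : Set A)) (hI₁0 : (0 : A) ∈ I₁)
    (hI₁add : ∀ x ∈ I₁, ∀ y ∈ I₁, x + y ∈ I₁)
    (hI₁mul : ∀ x ∈ I₁, ∀ a ∈ A₁, a * x ∈ I₁ ∧ x * a ∈ I₁)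
    (hI₁ker : ∀ x ∈ I₁, τ x = 0) :
    -- monotone independence of `(I₁, A₂)` with respect to `φ`
    ∀ (n : ℕ) (a b : ℕ → A), 0 < n →
      (∀ k < n, a k ∈ I₁) → (∀ k ≤ n, b k ∈ A₂) →
      φ (b 0 * ((List.range n).map (fun k => a k * b (k + 1))).prod) =
        φ (((List.range n).map a).prod) * ∏ k ∈ Finset.range (n + 1), φ (b k) :=
  conditionally_free_implies_monotone_independent_general τ φ hτ1 A₁ A₂ hcfree hφτ I₁ hI₁sub hI₁mul
    hI₁ker
end

section
/- Let (C, τ) be a non-commutative probability space generated by a subalgebra A and a unital subalgebra B, I the span of elements b₀a₁b₁⋯aₙbₙ (a_i ∈ A, b_i ∈ B), and ω : I → ℂ linear such that the pair (A, B) is cyclically monotone with respect to (ω, τ). Let p ∈ A with ω(p) ≠ 0 and define φ(c) := ω(pc)/ω(p). Then φ coincides with τ on B, and (A, B) is monotonically independent with respect to φ. -/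
/-!
Put `φ(c) = ω(p c)/ω(p)`. Prepending `p` to an alternating word `b₀ a₁ b₁ ⋯ aₙ bₙ` gives the word
`1 · p · b₀ a₁ b₁ ⋯ aₙ bₙ` with `n + 1` letters from `A`, whose outer letters from `B` are `1` and
`bₙ`. Cyclic monotonicity therefore factors `ω(p b₀ a₁ ⋯ aₙ bₙ)` as
`ω(p a₁ ⋯ aₙ) τ(b₀) ⋯ τ(bₙ₋₁) τ(bₙ)`. The case `n = 0` of the same computation is `φ = τ` on `B`,
and dividing by `ω(p)` gives monotone independence.
-/

/-- The word `b₀ a₁ b₁ ⋯ aₙ bₙ` is encoded as `b 0 * a 0 * b 1 * ⋯ * a (n - 1) * b n`. -/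
def IsCyclicallyMonotone {C : Type*} [Ring C] [Algebra ℂ C] (ω τ : C →ₗ[ℂ] ℂ)
    (A : NonUnitalSubalgebra ℂ C) (B : Subalgebra ℂ C) : Prop :=
  ∀ (n : ℕ) (a b : ℕ → C), 0 < n →
    (∀ k < n, a k ∈ A) → (∀ k ≤ n, b k ∈ B) →
    ω (b 0 * ((List.range n).map (fun k => a k * b (k + 1))).prod) =
      ω (((List.range n).map a).prod) * (∏ k ∈ Finset.Ico 1 n, τ (b k)) * τ (b 0 * b n)

namespace IsCyclicallyMonotone

variable {C : Type*} [Ring C] [Algebra ℂ C] {ω τ : C →ₗ[ℂ] ℂ}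
  {A : NonUnitalSubalgebra ℂ C} {B : Subalgebra ℂ C} {p : C}

theorem map_mul_left (hcm : IsCyclicallyMonotone ω τ A B) (hp : p ∈ A)
    (n : ℕ) (a b : ℕ → C) (ha : ∀ k < n, a k ∈ A) (hb : ∀ k ≤ n, b k ∈ B) :
    ω (p * (b 0 * ((List.range n).map (fun k => a k * b (k + 1))).prod)) =
      ω (p * ((List.range n).map a).prod) * (∏ k ∈ Finset.range n, τ (b k)) * τ (b n) := by
  let a' : ℕ → C := fun | 0 => p | k + 1 => a k
  let b' : ℕ → C := fun | 0 => 1 | k + 1 => b k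
  have ha' : ∀ k < n + 1, a' k ∈ A
    | 0, _ => hp
    | k + 1, hk => ha k (by omega)
  have hb' : ∀ k ≤ n + 1, b' k ∈ B
    | 0, _ => B.one_mem
    | k + 1, hk => hb k (by omega)
  have h := hcm (n + 1) a' b' n.succ_pos ha' hb'
  rw [List.prod_range_succ', List.prod_range_succ', Finset.prod_Ico_eq_prod_range] at h
  simpa only [a', b', one_mul, mul_assoc, Nat.add_sub_cancel, add_comm 1] using h

theorem map_mul_left_of_mem (hcm : IsCyclicallyMonotone ω τ A B) (hp : p ∈ A)
    {b : C} (hb : b ∈ B) : ω (p * b) = ω p * τ b := by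
  simpa using hcm.map_mul_left hp 0 (fun _ => 0) (fun _ => b) (by simp) (fun _ _ => hb)

end IsCyclicallyMonotone

theorem cyclically_monotone_implies_monotone_independent_general
    {C : Type*} [Ring C] [Algebra ℂ C]
    (τ : C →ₗ[ℂ] ℂ)
    (A : NonUnitalSubalgebra ℂ C) (B : Subalgebra ℂ C)
    (ω : C →ₗ[ℂ] ℂ)
    -- cyclic monotone independence of `(A, B)` with respect to `(ω, τ)`
    (hcm : ∀ (n : ℕ) (a b : ℕ → C), 0 < n →
      (∀ k < n, a k ∈ A) → (∀ k ≤ n, b k ∈ B) →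
      ω (b 0 * ((List.range n).map (fun k => a k * b (k + 1))).prod) =
        ω (((List.range n).map a).prod) *
          (∏ k ∈ Finset.Ico 1 n, τ (b k)) * τ (b 0 * b n))
    (p : C) (hp : p ∈ A) (hωp : ω p ≠ 0) :
    -- `φ(c) := ω(p c)/ω(p)` coincides with `τ` on `B`
    (∀ b ∈ B, ω (p * b) / ω p = τ b) ∧
    -- monotone independence of `(A, B)` with respect to `φ`
    (∀ (n : ℕ) (a b : ℕ → C), 0 < n →
      (∀ k < n, a k ∈ A) → (∀ k ≤ n, b k ∈ B) →
      ω (p * (b 0 * ((List.range n).map (fun k => a k * b (k + 1))).prod)) / ω p =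
        (ω (p * ((List.range n).map a).prod) / ω p) *
          ∏ k ∈ Finset.range (n + 1), (ω (p * b k) / ω p)) := by
  have hcm : IsCyclicallyMonotone ω τ A B := hcm
  have hφ : ∀ b ∈ B, ω (p * b) / ω p = τ b := fun b hb => by
    rw [hcm.map_mul_left_of_mem hp hb, mul_div_cancel_left₀ _ hωp]
  refine ⟨hφ, fun n a b _ ha hb => ?_⟩
  have hφb : ∀ k ∈ Finset.range (n + 1), ω (p * b k) / ω p = τ (b k) := fun k hk =>
    hφ (b k) (hb k (Nat.lt_succ_iff.mp (Finset.mem_range.mp hk)))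
  rw [Finset.prod_congr rfl hφb, Finset.prod_range_succ, hcm.map_mul_left hp n a b ha hb, div_mul_eq_mul_div, mul_assoc]

/-- If the pair `(A, B)` is cyclically monotone with respect to `(ω, τ)` in
`(C, τ)` and `p ∈ A` satisfies `ω(p) ≠ 0`, then `φ(c) := ω(p c)/ω(p)` coincides with `τ` on
`B` and `(A, B)` is monotonically independent with respect to `φ`. -/
theorem cyclically_monotone_implies_monotone_independent
    {C : Type*} [Ring C] [Algebra ℂ C]
    (τ : C →ₗ[ℂ] ℂ) (hτ1 : τ 1 = 1)
    (A : NonUnitalSubalgebra ℂ C) (B : Subalgebra ℂ C)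
    (hgen : Algebra.adjoin ℂ ((A : Set C) ∪ (B : Set C)) = ⊤)
    (ω : C →ₗ[ℂ] ℂ)
    -- cyclic monotone independence of `(A, B)` with respect to `(ω, τ)`
    (hcm : ∀ (n : ℕ) (a b : ℕ → C), 0 < n →
      (∀ k < n, a k ∈ A) → (∀ k ≤ n, b k ∈ B) →
      ω (b 0 * ((List.range n).map (fun k => a k * b (k + 1))).prod) =
        ω (((List.range n).map a).prod) *
          (∏ k ∈ Finset.Ico 1 n, τ (b k)) * τ (b 0 * b n))
    (p : C) (hp : p ∈ A) (hωp : ω p ≠ 0) :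
    -- `φ(c) := ω(p c)/ω(p)` coincides with `τ` on `B`
    (∀ b ∈ B, ω (p * b) / ω p = τ b) ∧
    -- monotone independence of `(A, B)` with respect to `φ`
    (∀ (n : ℕ) (a b : ℕ → C), 0 < n →
      (∀ k < n, a k ∈ A) → (∀ k ≤ n, b k ∈ B) →
      ω (p * (b 0 * ((List.range n).map (fun k => a k * b (k + 1))).prod)) / ω p =
        (ω (p * ((List.range n).map a).prod) / ω p) *
          ∏ k ∈ Finset.range (n + 1), (ω (p * b k) / ω p)) :=
  cyclically_monotone_implies_monotone_independent_general τ A B ω hcm p hp hωp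
end

section
/- For any permutations α, β ∈ Sₙ and the tensor action of Sₙ on (ℂᴺ)^⊗n, Tr_{n,N}(α ∘ βᵗ) = N^{#(α⁻¹β)}, where #σ is the number of cycles of σ. -/
open scoped TensorProduct
open PiTensorProduct Equiv

/-- The number of cycles of a permutation, counting fixed points as cycles of length one. -/
noncomputable def numCycles {n : ℕ} (σ : Perm (Fin n)) : ℕ :=
  σ.cycleType.card + (Finset.univ.filter fun x => σ x = x).card

/-! The tensors `e_{p 1} ⊗ ⋯ ⊗ e_{p n}` of standard basis vectors, `p : Fin n → Fin N`,
form a basis that the action of `σ` permutes by `p ↦ p ∘ σ⁻¹`. By cyclicity of the trace,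
`Tr(α ∘ β⁻¹) = Tr(β⁻¹α)`, and the trace of an operator permuting a basis counts the fixed
basis vectors: here the `p` constant on the cycles of `α⁻¹β`, of which there are
`N ^ #(α⁻¹β)`. -/

namespace LinearMap

theorem trace_eq_card_fixedPoints_of_basis {R M ι : Type*} [CommRing R] [AddCommGroup M]
    [Module R M] [Fintype ι] (b : Module.Basis ι R M) (π : ι → ι) {f : M →ₗ[R] M}
    (hf : ∀ i, f (b i) = b (π i)) :
    trace R M f = Nat.card {i // π i = i} := by
  classical
  rw [trace_eq_matrix_trace R b, Matrix.trace, Nat.card_eq_fintype_card, Fintype.card_subtype,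
    ← Finset.sum_boole]
  refine Finset.sum_congr rfl fun i _ => ?_
  rw [Matrix.diag_apply, toMatrix_apply, hf, Module.Basis.repr_self, Finsupp.single_apply]

end LinearMap

theorem PiTensorProduct.reindex_basis_piTensorProduct {R M ι κ : Type*} [CommSemiring R]
    [AddCommMonoid M] [Module R M] [Finite ι] (b : Module.Basis κ R M) (σ : Perm ι)
    (p : ι → κ) :
    reindex R (fun _ => M) σ (Basis.piTensorProduct (fun _ => b) p) =
      Basis.piTensorProduct (fun _ => b) (p ∘ σ.symm) := by
  simp

namespace Equiv.Perm

variable {α β : Type*}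

theorem comp_zpow_eq_of_comp_eq {σ : Perm α} {f : α → β} (hf : f ∘ σ = f) (i : ℤ) :
    f ∘ ⇑(σ ^ i) = f := by
  induction i using Int.induction_on with
  | zero => simp
  | succ k ih => rw [zpow_add_one, coe_mul, ← Function.comp_assoc, ih, hf]
  | pred k ih =>
    rw [zpow_sub_one, coe_mul, ← Function.comp_assoc, ih]
    conv_lhs => rw [← hf]
    ext x
    simp

def invariantFunctionsEquiv (σ : Perm α) :
    {f : α → β // f ∘ σ = f} ≃ (Quotient (SameCycle.setoid σ) → β) where
  toFun f := Quotient.lift f.1 fun _ _ ⟨i, hi⟩ => by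
    rw [← hi]; exact (congrFun (comp_zpow_eq_of_comp_eq f.2 i) _).symm
  invFun g := ⟨g ∘ Quotient.mk _, funext fun x =>
    congrArg g (Quotient.sound (⟨1, by simp⟩ : SameCycle σ x (σ x))).symm⟩
  left_inv f := rfl
  right_inv g := funext fun q => Quotient.inductionOn q fun _ => rfl

theorem nat_card_invariantFunctions [Finite α] (σ : Perm α) :
    Nat.card {f : α → β // f ∘ σ = f} =
      Nat.card β ^ Nat.card (Quotient (SameCycle.setoid σ)) := by
  rw [Nat.card_congr σ.invariantFunctionsEquiv, Nat.card_fun]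

theorem nat_card_quotient_sameCycle [Fintype α] [DecidableEq α] (σ : Perm α) :
    Nat.card (Quotient (SameCycle.setoid σ)) = σ.cycleType.card + Nat.card {x // σ x = x} := by
  -- A cycle class is either a fixed point or the support of a cycle factor.
  let IsFixed : Quotient (SameCycle.setoid σ) → Prop :=
    Quotient.lift (fun x => σ x = x) fun _ _ h => propext h.apply_eq_self_iff
  have hfixed : Nat.card {x // σ x = x} = Nat.card {q // IsFixed q} := by
    refine Nat.card_congr (Equiv.ofBijective (fun x => ⟨Quotient.mk _ x.1, x.2⟩) ⟨?_, ?_⟩)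
    · rintro ⟨x, hx⟩ ⟨y, _⟩ hxy
      have : SameCycle σ x y := Quotient.exact (congrArg Subtype.val hxy)
      exact Subtype.ext (this.eq_of_left hx)
    · rintro ⟨q, hq⟩
      induction q using Quotient.inductionOn with
      | h x => exact ⟨⟨x, hq⟩, rfl⟩
  have hcycles : Nat.card {q // ¬ IsFixed q} = σ.cycleType.card := by
    rw [cycleType_def, Multiset.card_map, ← Finset.card_def, ← Fintype.card_coe,
      ← Nat.card_eq_fintype_card]
    let cycle : Quotient (SameCycle.setoid σ) → Perm α :=
      Quotient.lift σ.cycleOf fun _ _ (h : SameCycle σ _ _) => h.cycleOf_eq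
    refine Nat.card_congr (Equiv.ofBijective (fun q => ⟨cycle q.1, ?_⟩) ⟨?_, ?_⟩)
    · obtain ⟨q, hq⟩ := q
      induction q using Quotient.inductionOn with
      | h x => exact cycleOf_mem_cycleFactorsFinset_iff.2 (mem_support.2 hq)
    · rintro ⟨q, hq⟩ ⟨r, hr⟩ h
      induction q using Quotient.inductionOn with | h x => ?_
      induction r using Quotient.inductionOn with | h y => ?_
      exact Subtype.ext (Quotient.sound ((sameCycle_iff_cycleOf_eq_of_mem_support
        (mem_support.2 hq) (mem_support.2 hr)).2 (congrArg Subtype.val h)))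
    · rintro ⟨c, hc⟩
      obtain ⟨x, hx⟩ := (mem_cycleFactorsFinset_iff.1 hc).1.nonempty_support
      exact ⟨⟨Quotient.mk _ x, mem_support.1 (mem_cycleFactorsFinset_support_le hc hx)⟩,
        Subtype.ext (cycle_is_cycleOf hx hc).symm⟩
  rw [← Nat.card_congr (Equiv.sumCompl IsFixed), Nat.card_sum, hfixed, hcycles, add_comm]

end Equiv.Perm

theorem PiTensorProduct.trace_reindex {R M ι κ : Type*} [CommRing R] [AddCommGroup M]
    [Module R M] [Fintype ι] [Fintype κ] (b : Module.Basis κ R M) (σ : Perm ι) :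
    LinearMap.trace R _ (reindex R (fun _ => M) σ).toLinearMap =
      Nat.card {p : ι → κ // p ∘ σ.symm = p} := by
  classical
  exact LinearMap.trace_eq_card_fixedPoints_of_basis (Basis.piTensorProduct fun _ => b) _
    (reindex_basis_piTensorProduct b σ)

theorem numCycles_eq_nat_card_quotient_sameCycle {n : ℕ} (σ : Perm (Fin n)) :
    numCycles σ = Nat.card (Quotient (Perm.SameCycle.setoid σ)) := by
  rw [numCycles, σ.nat_card_quotient_sameCycle, Nat.card_eq_fintype_card, Fintype.card_subtype]

/-- For permutations `α, β ∈ Sₙ` acting on `(ℂᴺ)^⊗n` by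
`σ·(v₁ ⊗ … ⊗ vₙ) = v_{σ⁻¹(1)} ⊗ … ⊗ v_{σ⁻¹(n)}`, with `βᵗ` (the adjoint of the action of
`β`) being the action of `β⁻¹`, one has `Tr_{n,N}(α ∘ βᵗ) = N^{#(α⁻¹β)}`. -/
theorem trace_of_permutation_operators {n N : ℕ} (α β : Equiv.Perm (Fin n)) :
    LinearMap.trace ℂ (⨂[ℂ] _i : Fin n, (Fin N → ℂ))
      ((PiTensorProduct.reindex ℂ (fun _ : Fin n => Fin N → ℂ)
          (α : Equiv.Perm (Fin n))).toLinearMap.comp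
        (PiTensorProduct.reindex ℂ (fun _ : Fin n => Fin N → ℂ)
          (β⁻¹ : Equiv.Perm (Fin n))).toLinearMap) =
      (N : ℂ) ^ numCycles (α⁻¹ * β) := by
  have hσ : (α.trans β⁻¹).symm = α⁻¹ * β := by
    show (β⁻¹ * α)⁻¹ = α⁻¹ * β
    rw [mul_inv_rev, inv_inv]
  rw [LinearMap.trace_comp_comm', ← LinearEquiv.coe_trans, reindex_trans,
    trace_reindex (Pi.basisFun ℂ (Fin N)), hσ, Perm.nat_card_invariantFunctions,
    numCycles_eq_nat_card_quotient_sameCycle, Nat.card_eq_fintype_card, Fintype.card_fin,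
    Nat.cast_pow]
end
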